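/- arXiv:1202.0535 — 3 statements merged into one kernel-verified Lean document; each statement's English description precedes it below -/
import Mathlib

section
/- (Root-counting vanishing condition) Let Q(X, Y_1, ..., Y_s) = A_0(X) + A_1(Y_1) + ... + A_s(Y_s) where A_0 is a linearized polynomial of q-degree at most D+k-1 and A_1, ..., A_s are linearized polynomials of q-degree at most D over F_{q^m}. Let f be a linearized polynomial over F_q of q-degree at most k-1 and γ ∈ F_{q^m}. Suppose there are ℓ - r elements x_1, ..., x_{ℓ-r} of F_{q^m} that are linearly independent over F_q such that Q(x_i, f(γ x_i), f(γ^q x_i), ..., f(γ^(q^(s-1)) x_i)) = 0 for all i. If ℓ - r > D + k - 1, then the univariate linearized polynomial Q̂(X) := Q(X, f(γX), f(γ^q X), ..., f(γ^(q^(s-1)) X)) is identically zero. -/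
open Polynomial Finset

/-!
Over `K = 𝔽_q`, the map `y ↦ y ^ q ^ n` is the `n`-th iterate of the Frobenius of `F` over `K`,
so `Q̂`, built from such monomials by sums and compositions, evaluates to a `K`-linear map
`F → F`. Hence `Q̂` vanishes on the whole `K`-span of the `xᵢ`, which has `q ^ (ℓ - r)`
elements, while `deg Q̂ ≤ q ^ (D + k - 1) < q ^ (ℓ - r)`.
-/

namespace Polynomial

section Degree

variable {R ι : Type*} [Semiring R]

theorem natDegree_sum_C_mul_X_pow_pow_le (s : Finset ι) (a : ι → R) (e : ι → ℕ) {q d : ℕ}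
    (hq : 0 < q) (he : ∀ i ∈ s, e i ≤ d) :
    (∑ i ∈ s, C (a i) * X ^ q ^ e i).natDegree ≤ q ^ d :=
  natDegree_sum_le_of_forall_le _ _ fun i hi =>
    (natDegree_C_mul_le _ _).trans <| (natDegree_X_pow_le _).trans <|
      Nat.pow_le_pow_right hq (he i hi)

theorem natDegree_comp_sum_fin_C_mul_X_pow_pow_le {P : R[X]} {q D k : ℕ} (hq : 0 < q)
    (hP : P.natDegree ≤ q ^ D) (b : Fin k → R) :
    (P.comp (∑ c : Fin k, C (b c) * X ^ q ^ (c : ℕ))).natDegree ≤ q ^ (D + k - 1) := by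
  cases k with
  | zero => simp
  | succ k =>
    calc _ ≤ P.natDegree * (∑ c : Fin (k + 1), C (b c) * X ^ q ^ (c : ℕ)).natDegree :=
          natDegree_comp_le
      _ ≤ q ^ D * q ^ k :=
          Nat.mul_le_mul hP <| natDegree_sum_C_mul_X_pow_pow_le _ _ _ hq fun c _ => by omega
      _ = q ^ (D + (k + 1) - 1) := by rw [← pow_add]; rfl

end Degree

section Linearized

variable (K F : Type*) [Field K] [Field F] [Algebra K F]

/-- Linearized polynomials in the semantic sense: those whose evaluation map is `K`-linear. -/
def linearized : Submodule F F[X] where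
  carrier := {P | ∃ f : F →ₗ[K] F, ∀ y, P.eval y = f y}
  add_mem' := by
    rintro P Q ⟨f, hf⟩ ⟨g, hg⟩
    exact ⟨f + g, fun y => by simp [hf, hg]⟩
  zero_mem' := ⟨0, fun _ => by simp⟩
  smul_mem' := by
    rintro a P ⟨f, hf⟩
    exact ⟨(LinearMap.mulLeft K a).comp f, fun y => by simp [hf]⟩

variable {K F}

theorem comp_mem_linearized {P Q : F[X]} (hP : P ∈ linearized K F) (hQ : Q ∈ linearized K F) :
    P.comp Q ∈ linearized K F := by
  obtain ⟨f, hf⟩ := hP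
  obtain ⟨g, hg⟩ := hQ
  exact ⟨f.comp g, fun y => by simp [hf, hg]⟩

theorem C_mul_X_pow_card_pow_mem_linearized [Fintype K] (a : F) (n : ℕ) :
    C a * X ^ Fintype.card K ^ n ∈ linearized K F := by
  rw [← smul_eq_C_mul]
  refine Submodule.smul_mem _ a ⟨(FiniteField.frobeniusAlgHom K F ^ n).toLinearMap, fun y => ?_⟩
  simp [AlgHom.coe_pow, FiniteField.coe_frobeniusAlgHom, pow_iterate]

theorem eval_sum_smul_of_mem_linearized {P : F[X]} (hP : P ∈ linearized K F) {ι : Type*}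
    [Fintype ι] (c : ι → K) (x : ι → F) :
    P.eval (∑ i, c i • x i) = ∑ i, c i • P.eval (x i) := by
  obtain ⟨f, hf⟩ := hP
  simp [hf]

theorem eq_zero_of_mem_linearized_of_linearIndependent [Fintype K] {P : F[X]}
    (hP : P ∈ linearized K F) {ι : Type*} [Fintype ι] {x : ι → F} (hx : LinearIndependent K x)
    (hroots : ∀ i, P.eval (x i) = 0) (hdeg : P.natDegree < Fintype.card K ^ Fintype.card ι) :
    P = 0 := by
  classical
  by_contra hP0
  let Z := univ.image (Fintype.linearCombination K x)
  have hZ : #Z = Fintype.card K ^ Fintype.card ι := by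
    rw [card_image_of_injective _
      (linearIndependent_iff_injective_fintypeLinearCombination.mp hx), card_univ,
      Fintype.card_fun]
  have hZroots : Z.val ⊆ P.roots := by
    intro y hy
    obtain ⟨c, -, rfl⟩ := mem_image.mp hy
    rw [mem_roots hP0, IsRoot, Fintype.linearCombination_apply,
      eval_sum_smul_of_mem_linearized hP]
    simp [hroots]
  exact (card_le_degree_of_subset_roots hZroots).not_gt (hZ ▸ hdeg)

end Linearized

end Polynomial

/-- Root-counting vanishing condition: if Q(X,Y₁,...,Y_s) = A₀(X) + Σ_j A_j(Y_j) with
A₀ of q-degree ≤ D+k-1 and each A_j of q-degree ≤ D, f is a linearized polynomial over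
F_q of q-degree ≤ k-1, and Q̂(X) := Q(X, f(γX), ..., f(γ^(q^(s-1))X)) vanishes at ℓ-r
F_q-linearly independent points with ℓ-r > D+k-1, then Q̂ is identically zero. -/
theorem root_counting_vanishing (K F : Type*) [Field K] [Field F] [Algebra K F]
    [Fintype K] (q : ℕ) (hq : Fintype.card K = q)
    (D k s ℓ r : ℕ) (A₀ : ℕ → F) (A : Fin s → ℕ → F) (u : Fin k → K) (γ : F)
    (x : Fin (ℓ - r) → F) (hx : LinearIndependent K x)
    (hvanish : ∀ i : Fin (ℓ - r),
      ((∑ n ∈ Finset.range (D + k), C (A₀ n) * X ^ q ^ n)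
        + ∑ j : Fin s,
            (∑ n ∈ Finset.range (D + 1), C (A j n) * X ^ q ^ n).comp
              (∑ c : Fin k,
                C (algebraMap K F (u c) * (γ ^ q ^ (j : ℕ)) ^ q ^ (c : ℕ))
                  * X ^ q ^ (c : ℕ))).eval (x i) = 0)
    (hrad : ℓ - r > D + k - 1) :
    (∑ n ∈ Finset.range (D + k), C (A₀ n) * X ^ q ^ n)
      + ∑ j : Fin s,
          (∑ n ∈ Finset.range (D + 1), C (A j n) * X ^ q ^ n).comp
            (∑ c : Fin k,
              C (algebraMap K F (u c) * (γ ^ q ^ (j : ℕ)) ^ q ^ (c : ℕ))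
                * X ^ q ^ (c : ℕ)) = 0 := by
  subst hq
  have hq : 0 < Fintype.card K := Fintype.card_pos
  refine eq_zero_of_mem_linearized_of_linearIndependent ?_ hx hvanish ?_
  · exact add_mem (sum_mem fun n _ => C_mul_X_pow_card_pow_mem_linearized _ _) <|
      sum_mem fun j _ => comp_mem_linearized
        (sum_mem fun n _ => C_mul_X_pow_card_pow_mem_linearized _ _)
        (sum_mem fun c _ => C_mul_X_pow_card_pow_mem_linearized _ _)
  · calc _ ≤ Fintype.card K ^ (D + k - 1) :=
          natDegree_add_le_of_degree_le
            (natDegree_sum_C_mul_X_pow_pow_le _ _ (fun n => n) hq fun n hn => by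
              simp only [mem_range] at hn; omega)
            (natDegree_sum_le_of_forall_le _ _ fun j _ =>
              natDegree_comp_sum_fin_C_mul_X_pow_pow_le hq
                (natDegree_sum_C_mul_X_pow_pow_le _ _ (fun n => n) hq fun n hn => by
                  simp only [mem_range] at hn; omega) _)
      _ < Fintype.card K ^ Fintype.card (Fin (ℓ - r)) := by
          rw [Fintype.card_fin]; exact Nat.pow_lt_pow_right Fintype.one_lt_card hrad
end

section
/- (Guaranteed nonzero low coefficient after shifting) Let Q(X, Y_1, ..., Y_s) = Σ_i a_{0i} X^(q^i) + Σ_{j=1}^s Σ_i a_{ji} Y_j^(q^i) be a nonzero polynomial over F_{q^m} of the above form, and let j* be the smallest index such that a_{ij*} ≠ 0 for some 0 ≤ i ≤ s. Suppose further that the univariate linearized polynomial Q̂(X) := Q(X, f(γX), ..., f(γ^(q^(s-1))X)) is identically zero for some linearized polynomial f over F_q and some γ. Then a_{ij*} ≠ 0 for some i with 1 ≤ i ≤ s. -/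
open Polynomial Finset

/-! Compare the coefficients of `X ^ q ^ jstar` in `Q̂`. The `X`-part contributes `a 0 jstar`.
Each `f(γ^(q^j) X)` is a multiple of `X`, so after substitution the `Y_j`-part only reaches
`X ^ q ^ jstar` through terms `Y_j ^ q ^ i` with `i ≤ jstar`; if all `a_{r jstar}` with `r ≥ 1`
vanish, these coefficients are zero by minimality of `jstar`, forcing `a 0 jstar = 0`. -/

namespace Polynomial

variable {R ι : Type*} [CommSemiring R]

theorem coeff_sum_C_mul_X_pow_of_injOn {s : Finset ι} {b : ι → R} {e : ι → ℕ}
    (he : Set.InjOn e s) {j : ι} (hj : j ∈ s) :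
    (∑ i ∈ s, C (b i) * X ^ e i).coeff (e j) = b j := by
  rw [finsetSum_coeff, Finset.sum_eq_single_of_mem j hj]
  · rw [coeff_C_mul_X_pow, if_pos rfl]
  · intro i hi hij
    rw [coeff_C_mul_X_pow, if_neg fun h => hij (he hi hj h.symm)]

theorem X_dvd_sum_C_mul_X_pow {s : Finset ι} {b : ι → R} {e : ι → ℕ}
    (he : ∀ i ∈ s, e i ≠ 0) : X ∣ ∑ i ∈ s, C (b i) * X ^ e i :=
  Finset.dvd_sum fun i hi => (dvd_pow_self X (he i hi)).mul_left _

theorem coeff_sum_C_mul_X_pow_comp_eq_zero {g : R[X]} (hg : X ∣ g) {s : Finset ι}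
    {b : ι → R} {e : ι → ℕ} {N : ℕ} (h : ∀ i ∈ s, b i ≠ 0 → N < e i) :
    ((∑ i ∈ s, C (b i) * X ^ e i).comp g).coeff N = 0 := by
  rw [sum_comp, finsetSum_coeff]
  refine Finset.sum_eq_zero fun i hi => ?_
  rw [mul_comp, C_comp, X_pow_comp, coeff_C_mul]
  by_cases hb : b i = 0
  · rw [hb, zero_mul]
  · rw [X_pow_dvd_iff.mp (pow_dvd_pow_of_dvd hg _) N (h i hi hb), mul_zero]

end Polynomial

/-- Guaranteed nonzero low coefficient after shifting: if j* is the smallest index with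
a_{rj*} ≠ 0 for some r, and Q̂(X) = Q(X, f(γX), ..., f(γ^(q^(s-1))X)) is identically
zero, then a_{rj*} ≠ 0 for some r with 1 ≤ r ≤ s. -/
theorem nonzero_low_coefficient (K F : Type*) [Field K] [Field F] [Algebra K F]
    [Fintype K] (q s M k : ℕ) (hq : Fintype.card K = q)
    (a : Fin (s + 1) → ℕ → F) (hsupp : ∀ r : Fin (s + 1), ∀ i : ℕ, M ≤ i → a r i = 0)
    (u : Fin k → K) (γ : F)
    (jstar : ℕ) (hmin : ∀ j : ℕ, j < jstar → ∀ r : Fin (s + 1), a r j = 0)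
    (hne : ∃ r : Fin (s + 1), a r jstar ≠ 0)
    (hQhat : (∑ i ∈ Finset.range M, C (a 0 i) * X ^ q ^ i)
      + ∑ j : Fin s,
          (∑ i ∈ Finset.range M, C (a j.succ i) * X ^ q ^ i).comp
            (∑ c : Fin k,
              C (algebraMap K F (u c) * (γ ^ q ^ (j : ℕ)) ^ q ^ (c : ℕ))
                * X ^ q ^ (c : ℕ)) = 0) :
    ∃ r : Fin (s + 1), r ≠ 0 ∧ a r jstar ≠ 0 := by
  by_contra! hcon
  have ha0 : a 0 jstar ≠ 0 := by
    obtain ⟨r, hr⟩ := hne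
    obtain rfl | hr0 := eq_or_ne r 0
    exacts [hr, absurd (hcon r hr0) hr]
  have hq1 : 1 < q := hq ▸ Fintype.one_lt_card
  have hjM : jstar < M := by
    by_contra! hj
    exact ha0 (hsupp 0 jstar hj)
  have hhigh : ∀ r : Fin (s + 1), r ≠ 0 → ∀ i, a r i ≠ 0 → q ^ jstar < q ^ i := by
    intro r hr i hi
    rw [Nat.pow_lt_pow_iff_right hq1]
    by_contra! hij
    obtain hlt | rfl := hij.lt_or_eq
    exacts [hi (hmin i hlt r), hi (hcon r hr)]
  have hcoeff := congrArg (coeff · (q ^ jstar)) hQhat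
  simp only [coeff_add, finsetSum_coeff (s := univ), coeff_zero] at hcoeff
  rw [coeff_sum_C_mul_X_pow_of_injOn (Nat.pow_right_injective hq1).injOn (mem_range.mpr hjM),
    Finset.sum_eq_zero fun j _ => coeff_sum_C_mul_X_pow_comp_eq_zero
      (X_dvd_sum_C_mul_X_pow fun c _ => (pow_pos (by omega) _).ne')
      fun i _ => hhigh j.succ j.succ_ne_zero i, add_zero] at hcoeff
  exact ha0 hcoeff
end

section
/- (Lower bound on list size for linear subspace codes) Let Enc : F_q^k → P(W) be an encoding of messages into subspaces such that the codeword of f is the span of vectors that depend linearly on f (i.e., there are linearly independent points and a linear evaluation map, as for linearized Reed–Solomon encodings). Suppose g_1, ..., g_{n+1} are messages whose coefficient vectors are linearly independent over F_q and whose encodings all contain a fixed received subspace T (no deletions case). Then every affine combination Σ λ_i g_i with Σ λ_i = 1, λ_i ∈ F_q, also has an encoding containing T; hence at least q^n codewords are consistent with T. -/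
open Finset

/-- Lower bound on list size for linear subspace codes: if the encoding of a message g
is the span of vectors (a_j, φ_j(g)) with the a_j linearly independent and φ_j linear,
and the encodings of n+1 linearly independent messages g_1, ..., g_{n+1} all contain a
fixed received subspace T, then every affine combination Σ λ_i g_i with Σ λ_i = 1 also
has encoding containing T; hence at least q^n messages are consistent with T. -/
theorem linear_code_list_size_lower_bound (K W₁ W₂ : Type*) [Field K] [Fintype K]
    [AddCommGroup W₁] [Module K W₁] [AddCommGroup W₂] [Module K W₂]
    (q k n ℓ : ℕ) (hq : Fintype.card K = q)
    (a : Fin ℓ → W₁) (ha : LinearIndependent K a)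
    (φ : Fin ℓ → ((Fin k → K) →ₗ[K] W₂))
    (g : Fin (n + 1) → (Fin k → K)) (hg : LinearIndependent K g)
    (T : Submodule K (W₁ × W₂))
    (hT : ∀ i : Fin (n + 1),
      T ≤ Submodule.span K (Set.range fun j : Fin ℓ => (a j, φ j (g i)))) :
    (∀ lam : Fin (n + 1) → K, ∑ i, lam i = 1 →
      T ≤ Submodule.span K
        (Set.range fun j : Fin ℓ => (a j, φ j (∑ i, lam i • g i))))
    ∧ q ^ n ≤ Set.ncard {h : Fin k → K |
        T ≤ Submodule.span K (Set.range fun j : Fin ℓ => (a j, φ j h))} := by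
  classical
  have key : ∀ lam : Fin (n + 1) → K, ∑ i, lam i = 1 →
      T ≤ Submodule.span K
        (Set.range fun j : Fin ℓ => (a j, φ j (∑ i, lam i • g i))) := by
    intro lam hlam v hv
    have hmem : ∀ i, ∃ c : Fin ℓ → K, ∑ j, c j • (a j, φ j (g i)) = v := by
      intro i
      exact (Submodule.mem_span_range_iff_exists_fun K).mp (hT i hv)
    choose c hc using hmem
    have hfst : ∀ i, ∑ j, c i j • a j = v.1 := by
      intro i
      have := congrArg Prod.fst (hc i)
      simpa [Prod.fst_sum] using this
    have hsnd : ∀ i, ∑ j, c i j • φ j (g i) = v.2 := by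
      intro i
      have := congrArg Prod.snd (hc i)
      simpa [Prod.snd_sum] using this
    have hceq : ∀ i, c i = c 0 := by
      intro i
      have h0 : ∑ j, (c i j - c 0 j) • a j = 0 := by
        simp [sub_smul, Finset.sum_sub_distrib, hfst i, hfst 0]
      funext j
      exact sub_eq_zero.mp (Fintype.linearIndependent_iff.mp ha _ h0 j)
    rw [Submodule.mem_span_range_iff_exists_fun K]
    refine ⟨c 0, ?_⟩
    have hsum : ∑ j, c 0 j • (a j, φ j (∑ i, lam i • g i))
        = (∑ j, c 0 j • a j, ∑ j, c 0 j • φ j (∑ i, lam i • g i)) := by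
      simp [Prod.ext_iff, Prod.fst_sum, Prod.snd_sum]
    rw [hsum]
    have h2 : ∑ j, c 0 j • φ j (∑ i, lam i • g i) = v.2 := by
      have hsw : ∑ j, c 0 j • φ j (∑ i, lam i • g i)
          = ∑ i, lam i • ∑ j, c 0 j • φ j (g i) := by
        calc ∑ j, c 0 j • φ j (∑ i, lam i • g i)
            = ∑ j, ∑ i, c 0 j • (lam i • φ j (g i)) := by
              simp [map_sum, map_smul, Finset.smul_sum]
          _ = ∑ i, ∑ j, lam i • (c 0 j • φ j (g i)) := by
              rw [Finset.sum_comm]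
              exact Finset.sum_congr rfl fun i _ =>
                Finset.sum_congr rfl fun j _ => smul_comm _ _ _
          _ = ∑ i, lam i • ∑ j, c 0 j • φ j (g i) := by
              simp [Finset.smul_sum]
      rw [hsw]
      have : ∀ i, ∑ j, c 0 j • φ j (g i) = v.2 := by
        intro i
        rw [← hceq i]; exact hsnd i
      simp only [this]
      rw [← Finset.sum_smul, hlam, one_smul]
    rw [h2, hfst 0]
  refine ⟨key, ?_⟩
  set Tg : Set (Fin k → K) := {h : Fin k → K |
      T ≤ Submodule.span K (Set.range fun j : Fin ℓ => (a j, φ j h))} with hTg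
  set S : Set (Fin (n + 1) → K) := {lam | ∑ i, lam i = 1} with hS
  have hmap : ∀ lam ∈ S, (∑ i, lam i • g i) ∈ Tg := fun lam h => key lam h
  have hinj : Set.InjOn (fun lam => ∑ i, lam i • g i) S := by
    intro x hx y hy hxy
    have h0 : ∑ i, (x i - y i) • g i = 0 := by
      simp only [sub_smul, Finset.sum_sub_distrib]
      simp only at hxy
      rw [hxy, sub_self]
    funext i
    exact sub_eq_zero.mp (Fintype.linearIndependent_iff.mp hg _ h0 i)
  have e : (Fin n → K) ≃ S :=
    { toFun := fun μ => ⟨Fin.snoc μ (1 - ∑ i, μ i), by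
        simp [hS, Fin.sum_univ_castSucc]⟩
      invFun := fun lam => Fin.init lam.1
      left_inv := by
        intro μ
        simp [Fin.init_snoc]
      right_inv := by
        intro ⟨lam, hlam⟩
        have hlast : (1 - ∑ i, Fin.init lam i) = lam (Fin.last n) := by
          have : ∑ i, lam i = 1 := hlam
          rw [Fin.sum_univ_castSucc] at this
          simp only [Fin.init]
          linear_combination -this
        ext1
        simp only
        rw [hlast, Fin.snoc_init_self] }
  have h1 : S.ncard = q ^ n := by
    rw [← Nat.card_coe_set_eq, Nat.card_congr e.symm]
    simp [Nat.card_eq_fintype_card, hq]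
  calc q ^ n = S.ncard := h1.symm
    _ ≤ Tg.ncard := Set.ncard_le_ncard_of_injOn _ hmap hinj (Set.toFinite Tg)
end
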